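/- Fix an integer g ≥ 1, let e₁,…,e_{2g+1} be pairwise distinct complex numbers, and let I₀ ⊆ {1,…,2g+1} be a g-element subset with complement J₀. For 1 ≤ k ≤ j ≤ g define P_{k,j} = (−1)^{k+j} Σ_{n=1}^{k} n · ( s_{g−k+n}(I₀)·S_{g−j−n+1}(J₀) + s_{g−j−n}(I₀)·S_{g+n−k+1}(J₀) ), and extend symmetrically by P_{j,k} = P_{k,j}. Then for every pair of distinct indices r, s ∈ I₀ one has Σ_{i=1}^{g} Σ_{j=1}^{g} P_{i,j} · e_r^{i−1} · e_s^{j−1} = F(e_r, e_s) / ( 4 (e_r − e_s)² ), where F is the Kleinian 2-polar. -/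

import Mathlib

/- STATEMENT 2: for pairwise distinct e₁,…,e_{2g+1} ∈ ℂ, a g-element subset I₀ with
   complement J₀, and the symmetric matrix P_{k,j} built from elementary symmetric
   functions of the branch points, one has, for distinct r, s ∈ I₀,
   Σ_{i,j=1}^{g} P_{i,j} e_r^{i−1} e_s^{j−1} = F(e_r,e_s)/(4(e_r−e_s)²). -/

open Finset

noncomputable section

/-- `m`-th elementary symmetric function of the numbers `{e i : i ∈ I}`, with the
convention that it vanishes for negative index `m`. -/
def esymmOn (g : ℕ) (e : Fin (2 * g + 1) → ℂ) (I : Finset (Fin (2 * g + 1))) (m : ℤ) : ℂ :=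
  if m < 0 then 0 else (I.val.map e).esymm m.toNat

/-- The coefficients λ_m defined by `4∏_{j}(x−e_j) = 4x^{2g+1} + Σ_{i=0}^{2g} λᵢ xⁱ`
(with λ_{2g+1} = 4), i.e. `λ_m = 4(−1)^{2g+1−m} σ_{2g+1−m}(e₁,…,e_{2g+1})`. -/
def lamNum (g : ℕ) (e : Fin (2 * g + 1) → ℂ) (m : ℕ) : ℂ :=
  4 * (-1) ^ (2 * g + 1 - m) *
    ((Finset.univ : Finset (Fin (2 * g + 1))).val.map e).esymm (2 * g + 1 - m)

/-- The Kleinian 2-polar `F(x,z) = Σ_{k=0}^{g} x^k z^k (2λ_{2k} + λ_{2k+1}(x+z))`. -/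
def kleinPolar (g : ℕ) (e : Fin (2 * g + 1) → ℂ) (x z : ℂ) : ℂ :=
  ∑ k ∈ Finset.range (g + 1),
    x ^ k * z ^ k * (2 * lamNum g e (2 * k) + lamNum g e (2 * k + 1) * (x + z))

/-- The quantity `P_{k,j}` for `1 ≤ k ≤ j ≤ g`, extended symmetrically
(`P_{j,k} = P_{k,j}` via taking `min` and `max` of the indices):
`P_{k,j} = (−1)^{k+j} Σ_{n=1}^{k} n (s_{g−k+n}(I₀) S_{g−j−n+1}(J₀)
  + s_{g−j−n}(I₀) S_{g+n−k+1}(J₀))`. -/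
def Pmat (g : ℕ) (e : Fin (2 * g + 1) → ℂ) (I : Finset (Fin (2 * g + 1))) (k j : ℕ) : ℂ :=
  (-1 : ℂ) ^ (k + j) *
    ∑ n ∈ Finset.Icc 1 (min k j),
      (n : ℂ) *
        (esymmOn g e I ((g : ℤ) - min k j + n) * esymmOn g e Iᶜ ((g : ℤ) - max k j - n + 1) +
          esymmOn g e I ((g : ℤ) - max k j - n) * esymmOn g e Iᶜ ((g : ℤ) + n - min k j + 1))

open Polynomial Lagrange

/-!
Let `U = ∏_{i ∈ I₀} (X - eᵢ)` and `V = ∏_{j ∈ J₀} (X - eⱼ)` with coefficients `uₐ`, `v_b`, so that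
`UV` has coefficients `λₘ / 4`. By Vieta, `P_{k,j} = -∑ₙ n (u_{k-n} v_{j+n} + u_{j+n} v_{k-n})`
for `k ≤ j`. With `φₘ(x, z) = x^⌊m/2⌋ z^⌈m/2⌉ + x^⌈m/2⌉ z^⌊m/2⌋` the polar is
`F = ∑ₘ λₘ φₘ`, and for `a + 2 ≤ b` the defect `x^a z^b + x^b z^a - φ_{a+b}` equals
`(x - z)² (xz)^a T_{b-a-2}` for the tent polynomial `Tₘ = ∑_{p+q=m} (min p q + 1) x^p z^q`.
The substitution `(a, b) = (min k j - n, max k j + n)` matches the quadratic form of `P` with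
these tents, giving the polynomial identity
`4 (x - z)² ∑ P_{i,j} x^{i-1} z^{j-1} = F(x, z) - 4 (U(x) V(z) + U(z) V(x))`;
at two roots `x = e_r`, `z = e_s` of `U` the last term vanishes.
-/

lemma sum_range_two_mul {M : Type*} [AddCommMonoid M] (f : ℕ → M) (n : ℕ) :
    ∑ m ∈ range (2 * n), f m = ∑ k ∈ range n, (f (2 * k) + f (2 * k + 1)) := by
  induction n with
  | zero => simp
  | succ n ih => rw [mul_add_one, sum_range_succ, sum_range_succ, sum_range_succ, ih, add_assoc]

lemma sum_range_sum_range_eq_sum_triangle {M : Type*} [AddCommMonoid M] (f : ℕ → ℕ → M)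
    (N : ℕ) :
    ∑ a ∈ range N, ∑ b ∈ range N, f a b =
      ∑ b ∈ range N, (f b b + ∑ a ∈ range b, (f a b + f b a)) := by
  induction N with
  | zero => simp
  | succ N ih =>
    simp only [sum_range_succ, sum_add_distrib, ih]
    abel

lemma sum_antidiagonal_add_two {M : Type*} [AddCommMonoid M] (f : ℕ × ℕ → M) (m : ℕ) :
    ∑ p ∈ antidiagonal (m + 2), f p =
      f (0, m + 2) + f (m + 2, 0) + ∑ p ∈ antidiagonal m, f (p.1 + 1, p.2 + 1) := by
  rw [Nat.sum_antidiagonal_succ, Nat.sum_antidiagonal_succ']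
  exact (add_assoc _ _ _).symm

lemma sum_range_coeff_mul_mul {R : Type*} [CommSemiring R] (p q : R[X]) (f : ℕ → R) {M N : ℕ}
    (hM : (p * q).natDegree < M) (hp : p.natDegree < N) (hq : q.natDegree < N) :
    ∑ m ∈ range M, (p * q).coeff m * f m =
      ∑ a ∈ range N, ∑ b ∈ range N, p.coeff a * q.coeff b * f (a + b) := by
  let L : R[X] →ₗ[R] R := lsum fun m => LinearMap.mulRight R (f m)
  have hL (r : R[X]) {K : ℕ} (hK : r.natDegree < K) :
      L r = ∑ m ∈ range K, r.coeff m * f m := by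
    simp only [L, lsum_apply, LinearMap.mulRight_apply]
    exact sum_over_range' r (fun m => zero_mul (f m)) K hK
  have hmono (n : ℕ) (c : R) : L (monomial n c) = c * f n := by
    simp [L, lsum_apply, sum_monomial_index]
  rw [← hL (p * q) hM]
  conv_lhs => rw [as_sum_range' p N hp, as_sum_range' q N hq]
  simp only [sum_mul_sum, map_sum, monomial_mul_monomial, hmono]

section TentForm

variable {R : Type*} [CommSemiring R] (x z : R)

def tentSum (m : ℕ) : R :=
  ∑ p ∈ antidiagonal m, ((min p.1 p.2 + 1 : ℕ) : R) * x ^ p.1 * z ^ p.2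

def tentCoeff (w : ℕ → ℕ → R) (k j : ℕ) : R :=
  ∑ n ∈ Icc 1 (min k j), (n : R) * w (min k j - n) (max k j + n)

lemma sum_tentCoeff_mul_pow (g : ℕ) (w : ℕ → ℕ → R) (hw : ∀ a b, g + 1 < b → w a b = 0) :
    ∑ k ∈ Icc 1 g, ∑ j ∈ Icc 1 g, tentCoeff w k j * x ^ (k - 1) * z ^ (j - 1) =
      ∑ b ∈ range (g + 2), ∑ a ∈ range (b - 1),
        w a b * ((x * z) ^ a * tentSum x z (b - a - 2)) := by
  simp only [tentCoeff, tentSum, sum_mul, mul_sum, sum_sigma']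
  rw [← sum_filter_of_ne (p := fun t => max t.1 t.2.1 + t.2.2 ≤ g + 1)]
  · symm
    refine sum_nbij'
      (fun t => ⟨t.2.1 + t.2.2.1 + 1, t.2.1 + t.2.2.2 + 1, min t.2.2.1 t.2.2.2 + 1⟩)
      (fun t => ⟨max t.1 t.2.1 + t.2.2, min t.1 t.2.1 - t.2.2,
        (t.1 - 1 - (min t.1 t.2.1 - t.2.2), t.2.1 - 1 - (min t.1 t.2.1 - t.2.2))⟩)
      ?_ ?_ ?_ ?_ ?_
    all_goals simp only [mem_sigma, mem_filter, mem_range, mem_Icc,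
      HasAntidiagonal.mem_antidiagonal, Sigma.forall, Prod.forall, Sigma.mk.injEq, heq_eq_eq,
      Prod.mk.injEq]
    · intros; omega
    · intros; omega
    · intros; omega
    · intros; omega
    · intro b a p q ht
      have hmin : min (a + p + 1) (a + q + 1) - (min p q + 1) = a := by omega
      have hmax : max (a + p + 1) (a + q + 1) + (min p q + 1) = b := by omega
      rw [hmin, hmax, Nat.add_sub_cancel, Nat.add_sub_cancel]
      push_cast
      ring
  · rintro ⟨k, j, n⟩ _ hne
    by_contra! hlt
    exact hne (by simp [hw _ _ hlt])

lemma tentSum_add_two (m : ℕ) :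
    tentSum x z (m + 2) =
      x * z * tentSum x z m + ∑ p ∈ antidiagonal (m + 2), x ^ p.1 * z ^ p.2 := by
  have hshift (p : ℕ × ℕ) :
      ((min (p.1 + 1) (p.2 + 1) + 1 : ℕ) : R) * x ^ (p.1 + 1) * z ^ (p.2 + 1) =
        x * z * (((min p.1 p.2 + 1 : ℕ) : R) * x ^ p.1 * z ^ p.2) +
          x ^ (p.1 + 1) * z ^ (p.2 + 1) := by
    rw [min_add_add_right]; push_cast; ring
  simp only [tentSum, sum_antidiagonal_add_two, hshift, sum_add_distrib, mul_sum, Nat.zero_min,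
    Nat.min_zero, zero_add, Nat.cast_one, pow_zero, one_mul, mul_one]
  ring

end TentForm

section PolarDefect

variable {R : Type*} [CommRing R] (x z : R)

def polarMonomial (m : ℕ) : R :=
  x ^ (m / 2) * z ^ (m - m / 2) + x ^ (m - m / 2) * z ^ (m / 2)

def polarDefect (a b : ℕ) : R := x ^ a * z ^ b + x ^ b * z ^ a - polarMonomial x z (a + b)

lemma polarMonomial_two_mul_add (a m : ℕ) :
    polarMonomial x z (2 * a + m) = (x * z) ^ a * polarMonomial x z m := by
  simp only [polarMonomial, show (2 * a + m) / 2 = a + m / 2 by omega,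
    show 2 * a + m - (a + m / 2) = a + (m - m / 2) by omega]
  ring

lemma polarDefect_comm (a b : ℕ) : polarDefect x z a b = polarDefect x z b a := by
  rw [polarDefect, polarDefect, add_comm a b]
  ring

lemma polarDefect_add (a n : ℕ) :
    polarDefect x z a (a + n) = (x * z) ^ a * polarDefect x z 0 n := by
  rw [polarDefect, polarDefect, ← add_assoc, ← Nat.two_mul, polarMonomial_two_mul_add, zero_add]
  ring

lemma polarDefect_self (a : ℕ) : polarDefect x z a a = 0 := by
  simpa [polarDefect, polarMonomial] using polarDefect_add x z a 0

lemma polarDefect_add_one (a : ℕ) : polarDefect x z a (a + 1) = 0 := by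
  rw [polarDefect_add]
  simp [polarDefect, polarMonomial]

lemma sub_mul_sum_antidiagonal_pow (n : ℕ) :
    (x - z) * ∑ p ∈ antidiagonal n, x ^ p.1 * z ^ p.2 = x ^ (n + 1) - z ^ (n + 1) := by
  rw [Nat.sum_antidiagonal_eq_sum_range_succ (fun i j => x ^ i * z ^ j), mul_comm,
    ← geom_sum₂_mul]
  simp

lemma sub_sq_mul_tentSum (m : ℕ) :
    (x - z) ^ 2 * tentSum x z m = polarDefect x z 0 (m + 2) := by
  induction m using Nat.twoStepInduction with
  | zero => simp [tentSum, polarDefect, polarMonomial]; ring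
  | one => simp [tentSum, polarDefect, polarMonomial, Nat.antidiagonal_succ]; ring
  | more m ih _ =>
    rw [tentSum_add_two, mul_add, mul_left_comm, ih]
    simp only [polarDefect, zero_add, pow_zero, one_mul, mul_one]
    rw [show m + 2 + 2 = 2 * 1 + (m + 2) by ring, polarMonomial_two_mul_add, pow_one]
    linear_combination (x - z) * sub_mul_sum_antidiagonal_pow x z (m + 2)

lemma sub_sq_mul_sum_tentCoeff_mul_pow (g : ℕ) (w : ℕ → ℕ → R)
    (hw : ∀ a b, g + 1 < b → w a b = 0) :
    (x - z) ^ 2 * ∑ k ∈ Icc 1 g, ∑ j ∈ Icc 1 g, tentCoeff w k j * x ^ (k - 1) * z ^ (j - 1) =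
      ∑ b ∈ range (g + 2), ∑ a ∈ range b, w a b * polarDefect x z a b := by
  rw [sum_tentCoeff_mul_pow x z g w hw, mul_sum]
  refine sum_congr rfl fun b _ => ?_
  rcases b with _ | b
  · simp
  rw [mul_sum, sum_range_succ, polarDefect_add_one, mul_zero, add_zero, Nat.add_sub_cancel]
  refine sum_congr rfl fun a ha => ?_
  rw [mem_range] at ha
  obtain ⟨m, rfl⟩ : ∃ m, b = a + m + 1 := ⟨b - a - 1, by omega⟩
  rw [show a + m + 1 + 1 - a - 2 = m by omega, show a + m + 1 + 1 = a + (m + 2) by omega,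
    polarDefect_add, ← sub_sq_mul_tentSum]
  ring

lemma sum_triangle_mul_polarDefect (p q : R[X]) {N : ℕ} (hp : p.natDegree < N)
    (hq : q.natDegree < N) :
    ∑ b ∈ range N, ∑ a ∈ range b,
        (p.coeff a * q.coeff b + q.coeff a * p.coeff b) * polarDefect x z a b =
      p.eval x * q.eval z + p.eval z * q.eval x -
        ∑ a ∈ range N, ∑ b ∈ range N, p.coeff a * q.coeff b * polarMonomial x z (a + b) := by
  have hsymm : ∑ a ∈ range N, ∑ b ∈ range N, p.coeff a * q.coeff b * polarDefect x z a b =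
      ∑ b ∈ range N, ∑ a ∈ range b,
        (p.coeff a * q.coeff b + q.coeff a * p.coeff b) * polarDefect x z a b := by
    rw [sum_range_sum_range_eq_sum_triangle]
    refine sum_congr rfl fun b _ => ?_
    rw [polarDefect_self, mul_zero, zero_add]
    refine sum_congr rfl fun a _ => ?_
    rw [polarDefect_comm x z b a]
    ring
  rw [← hsymm, eval_eq_sum_range' hp, eval_eq_sum_range' hp, eval_eq_sum_range' hq,
    eval_eq_sum_range' hq, sum_mul_sum, sum_mul_sum, ← sum_add_distrib, ← sum_sub_distrib]
  refine sum_congr rfl fun a _ => ?_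
  rw [← sum_add_distrib, ← sum_sub_distrib]
  refine sum_congr rfl fun b _ => ?_
  rw [polarDefect]
  ring

theorem sub_sq_mul_sum_tentCoeff (g : ℕ) (p q : R[X]) (hp : p.natDegree < g + 2)
    (hq : q.natDegree < g + 2) :
    (x - z) ^ 2 * ∑ k ∈ Icc 1 g, ∑ j ∈ Icc 1 g,
        (tentCoeff (fun a b => p.coeff a * q.coeff b) k j +
          tentCoeff (fun a b => q.coeff a * p.coeff b) k j) * x ^ (k - 1) * z ^ (j - 1) =
      p.eval x * q.eval z + p.eval z * q.eval x -
        ∑ a ∈ range (g + 2), ∑ b ∈ range (g + 2),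
          p.coeff a * q.coeff b * polarMonomial x z (a + b) := by
  have hvanish (r : R[X]) (hr : r.natDegree < g + 2) (s : R[X]) (a b : ℕ) (hb : g + 1 < b) :
      s.coeff a * r.coeff b = 0 := by
    rw [coeff_eq_zero_of_natDegree_lt (p := r) (by omega), mul_zero]
  simp only [add_mul, sum_add_distrib, mul_add]
  rw [sub_sq_mul_sum_tentCoeff_mul_pow x z g _ (hvanish q hq p),
    sub_sq_mul_sum_tentCoeff_mul_pow x z g _ (hvanish p hp q), ← sum_add_distrib,
    ← sum_triangle_mul_polarDefect x z p q hp hq]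
  refine sum_congr rfl fun b _ => ?_
  rw [← sum_add_distrib]
  refine sum_congr rfl fun a _ => ?_
  ring

end PolarDefect

lemma coeff_nodal {ι R : Type*} [CommRing R] (s : Finset ι) (v : ι → R) {t : ℕ}
    (ht : t ≤ s.card) :
    (nodal s v).coeff t = (-1) ^ (s.card - t) * (s.val.map v).esymm (s.card - t) := by
  have h := Multiset.prod_X_sub_C_coeff (s.val.map v) (k := t) (by simpa using ht)
  rw [Multiset.map_map, Multiset.card_map, Finset.card_val] at h
  exact h

lemma card_compl_of_card_eq {g : ℕ} {I : Finset (Fin (2 * g + 1))} (hI : I.card = g) :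
    Iᶜ.card = g + 1 := by
  rw [card_compl, Fintype.card_fin, hI]
  omega

lemma esymmOn_card_sub {g : ℕ} (e : Fin (2 * g + 1) → ℂ) (S : Finset (Fin (2 * g + 1)))
    (t : ℕ) :
    esymmOn g e S ((S.card : ℤ) - t) = (-1) ^ (S.card + t) * (nodal S e).coeff t := by
  rcases le_or_gt t S.card with ht | ht
  · rw [esymmOn, if_neg (by omega), coeff_nodal S e ht, ← mul_assoc, ← pow_add,
      show S.card + t + (S.card - t) = 2 * S.card by omega, pow_mul, neg_one_sq, one_pow,
      one_mul]
    congr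
    omega
  · rw [esymmOn, if_pos (by omega), coeff_eq_zero_of_natDegree_lt (by simpa using ht), mul_zero]

lemma lamNum_eq_coeff_nodal {g : ℕ} (e : Fin (2 * g + 1) → ℂ) {m : ℕ} (hm : m ≤ 2 * g + 1) :
    lamNum g e m = 4 * (nodal univ e).coeff m := by
  rw [lamNum, coeff_nodal univ e (by simpa using hm), card_univ, Fintype.card_fin, mul_assoc]

lemma Pmat_eq_neg_tentCoeff {g : ℕ} (e : Fin (2 * g + 1) → ℂ) {I : Finset (Fin (2 * g + 1))}
    (hI : I.card = g) (k j : ℕ) :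
    Pmat g e I k j =
      -(tentCoeff (fun a b => (nodal I e).coeff a * (nodal Iᶜ e).coeff b) k j +
        tentCoeff (fun a b => (nodal Iᶜ e).coeff a * (nodal I e).coeff b) k j) := by
  have hIc := card_compl_of_card_eq hI
  rw [Pmat, tentCoeff, tentCoeff, ← sum_add_distrib, mul_sum, ← sum_neg_distrib]
  refine sum_congr rfl fun n hn => ?_
  rw [mem_Icc] at hn
  rw [show (g : ℤ) - min k j + n = I.card - ((min k j - n : ℕ) : ℤ) by rw [hI]; omega,
    show (g : ℤ) - max k j - n + 1 = Iᶜ.card - ((max k j + n : ℕ) : ℤ) by rw [hIc]; omega,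
    show (g : ℤ) - max k j - n = I.card - ((max k j + n : ℕ) : ℤ) by rw [hI]; omega,
    show (g : ℤ) + n - min k j + 1 = Iᶜ.card - ((min k j - n : ℕ) : ℤ) by rw [hIc]; omega]
  rw [esymmOn_card_sub, esymmOn_card_sub, esymmOn_card_sub, esymmOn_card_sub, hI, hIc]
  have hsign (c d : ℕ) (hcd : c + d = k + j) :
      (-1 : ℂ) ^ (k + j) * (-1) ^ (g + c) * (-1) ^ (g + 1 + d) = -1 := by
    rw [← pow_add, ← pow_add,
      show k + j + (g + c) + (g + 1 + d) = 2 * (k + j + g) + 1 by omega]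
    exact Odd.neg_one_pow ⟨_, rfl⟩
  linear_combination
    (n : ℂ) * (nodal I e).coeff (min k j - n) * (nodal Iᶜ e).coeff (max k j + n) *
        hsign (min k j - n) (max k j + n) (by omega) +
      (n : ℂ) * (nodal I e).coeff (max k j + n) * (nodal Iᶜ e).coeff (min k j - n) *
        hsign (max k j + n) (min k j - n) (by omega)

lemma kleinPolar_eq_sum_polarMonomial {g : ℕ} (e : Fin (2 * g + 1) → ℂ) (x z : ℂ) :
    kleinPolar g e x z = ∑ m ∈ range (2 * g + 2), lamNum g e m * polarMonomial x z m := by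
  rw [kleinPolar, show 2 * g + 2 = 2 * (g + 1) by ring, sum_range_two_mul]
  refine sum_congr rfl fun k _ => ?_
  simp only [polarMonomial, show 2 * k / 2 = k by omega, show (2 * k + 1) / 2 = k by omega,
    show 2 * k - k = k by omega, show 2 * k + 1 - k = k + 1 by omega]
  ring

lemma kleinPolar_eq_sum_coeff_nodal {g : ℕ} (e : Fin (2 * g + 1) → ℂ)
    {I : Finset (Fin (2 * g + 1))} (hI : I.card = g) (x z : ℂ) :
    kleinPolar g e x z = 4 * ∑ a ∈ range (g + 2), ∑ b ∈ range (g + 2),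
      (nodal I e).coeff a * (nodal Iᶜ e).coeff b * polarMonomial x z (a + b) := by
  have hnodal : nodal I e * nodal Iᶜ e = nodal univ e := prod_mul_prod_compl I _
  rw [kleinPolar_eq_sum_polarMonomial, ← sum_range_coeff_mul_mul _ _ _ (M := 2 * g + 2)
    (by simp [hnodal]) (by simp [hI]) (by simp [card_compl_of_card_eq hI]), mul_sum, hnodal]
  refine sum_congr rfl fun m hm => ?_
  rw [lamNum_eq_coeff_nodal e (by simp at hm; omega), mul_assoc]

theorem four_mul_sub_sq_mul_sum_Pmat {g : ℕ} (e : Fin (2 * g + 1) → ℂ)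
    {I : Finset (Fin (2 * g + 1))} (hI : I.card = g) (x z : ℂ) :
    4 * (x - z) ^ 2 *
        ∑ k ∈ Icc 1 g, ∑ j ∈ Icc 1 g, Pmat g e I k j * x ^ (k - 1) * z ^ (j - 1) =
      kleinPolar g e x z - 4 * ((nodal I e).eval x * (nodal Iᶜ e).eval z +
        (nodal I e).eval z * (nodal Iᶜ e).eval x) := by
  have hquot := sub_sq_mul_sum_tentCoeff x z g (nodal I e) (nodal Iᶜ e) (by simp [hI])
    (by simp [card_compl_of_card_eq hI])
  simp only [Pmat_eq_neg_tentCoeff e hI, neg_mul, sum_neg_distrib, mul_neg]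
  rw [mul_assoc, hquot, kleinPolar_eq_sum_coeff_nodal e hI]
  ring

theorem klein_formula_at_half_period_general (g : ℕ)
    (e : Fin (2 * g + 1) → ℂ) (he : Function.Injective e)
    (I : Finset (Fin (2 * g + 1))) (hI : I.card = g)
    (r s : Fin (2 * g + 1)) (hr : r ∈ I) (hs : s ∈ I) (hrs : r ≠ s) :
    ∑ i ∈ Finset.Icc 1 g, ∑ j ∈ Finset.Icc 1 g,
        Pmat g e I i j * (e r) ^ (i - 1) * (e s) ^ (j - 1) =
      kleinPolar g e (e r) (e s) / (4 * (e r - e s) ^ 2) := by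
  have hne : 4 * (e r - e s) ^ 2 ≠ 0 :=
    mul_ne_zero (by norm_num) (pow_ne_zero 2 (sub_ne_zero.mpr (he.ne hrs)))
  rw [eq_div_iff hne, mul_comm, four_mul_sub_sq_mul_sum_Pmat e hI, eval_nodal_at_node hr,
    eval_nodal_at_node hs]
  ring

theorem klein_formula_at_half_period (g : ℕ) (hg : 1 ≤ g)
    (e : Fin (2 * g + 1) → ℂ) (he : Function.Injective e)
    (I : Finset (Fin (2 * g + 1))) (hI : I.card = g)
    (r s : Fin (2 * g + 1)) (hr : r ∈ I) (hs : s ∈ I) (hrs : r ≠ s) :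
    ∑ i ∈ Finset.Icc 1 g, ∑ j ∈ Finset.Icc 1 g,
        Pmat g e I i j * (e r) ^ (i - 1) * (e s) ^ (j - 1) =
      kleinPolar g e (e r) (e s) / (4 * (e r - e s) ^ 2) :=
  klein_formula_at_half_period_general g e he I hI r s hr hs hrs
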